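/- arXiv:1408.6907 — 2 statements merged into one kernel-verified Lean document; each statement's English description precedes it below -/
import Mathlib

section
/- For every X ∈ V and every form φ on V the following commutator identities hold: L(i(X)φ) − i(X)(Lφ) = (JX)♭ ∧ φ; L(X♭ ∧ φ) − X♭ ∧ (Lφ) = 0; Λ(i(X)φ) − i(X)(Λφ) = 0; and Λ(X♭ ∧ φ) − X♭ ∧ (Λφ) = −i(JX)φ. -/
open scoped RealInnerProductSpace
open Finset

noncomputable section

/-- `n`-forms on `V`: alternating `n`-linear maps `V^n → ℝ`. -/
abbrev Form (V : Type*) [AddCommGroup V] [Module ℝ V] (n : ℕ) :=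
  AlternatingMap ℝ V ℝ (Fin n)

variable {V : Type*} [NormedAddCommGroup V] [InnerProductSpace ℝ V]

/-- The metric dual covector `X♭`, as a 1-form: `X♭(Y) = ⟪X, Y⟫`. -/
def flat (X : V) : Form V 1 :=
  AlternatingMap.ofSubsingleton ℝ V ℝ 0 ((innerSL ℝ X).toLinearMap)

/-- Interior product `i(X)` on forms of positive degree. -/
def iprodS {n : ℕ} (X : V) (φ : Form V (n + 1)) : Form V n :=
  φ.curryLeft X

/-- Wedge product of a 1-form with an `n`-form. -/
def eps {n : ℕ} (ω : Form V 1) (φ : Form V n) : Form V (n + 1) :=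
  AlternatingMap.domDomCongr (finSumFinEquiv.trans (finCongr (Nat.add_comm 1 n)))
    ((TensorProduct.lid ℝ ℝ).toLinearMap.compAlternatingMap (ω.domCoprod φ))

/-- The Kähler form `Ω(X, Y) = ⟪X, J Y⟫` of an orthogonal complex structure `J`. -/
def Kform (J : V →ₗ[ℝ] V) (hJO : ∀ x y : V, ⟪J x, J y⟫ = ⟪x, y⟫)
    (hJ2 : ∀ x : V, J (J x) = -x) : Form V 2 where
  toFun v := ⟪v 0, J (v 1)⟫
  map_update_add' v i x y := by
    fin_cases i <;>
      simp [Function.update_apply, inner_add_left, inner_add_right, map_add]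
  map_update_smul' v i c x := by
    fin_cases i <;>
      simp [Function.update_apply, inner_smul_left, inner_smul_right, map_smul]
  map_eq_zero_of_eq' v i j hv hij := by
    have h01 : v 0 = v 1 := by
      fin_cases i <;> fin_cases j <;> simp_all
    have key : ∀ x : V, ⟪x, J x⟫ = 0 := by
      intro x
      have h1 := hJO x (J x)
      rw [hJ2 x] at h1
      have h2 : ⟪J x, -x⟫ = -⟪x, J x⟫ := by
        rw [inner_neg_right, real_inner_comm]
      rw [h2] at h1
      linarith
    show ⟪v 0, J (v 1)⟫ = 0
    rw [h01]
    exact key _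

/-- Wedge product of a 2-form with an `n`-form. -/
def wedge2 {n : ℕ} (ω : Form V 2) (φ : Form V n) : Form V (n + 2) :=
  AlternatingMap.domDomCongr (finSumFinEquiv.trans (finCongr (Nat.add_comm 2 n)))
    ((TensorProduct.lid ℝ ℝ).toLinearMap.compAlternatingMap (ω.domCoprod φ))

/-- The Lefschetz-type operator `L φ = Ω ∧ φ`. -/
def Lop {n : ℕ} (Ω : Form V 2) (φ : Form V n) : Form V (n + 2) :=
  wedge2 Ω φ

/-- The operator `Λ φ = -(1/2) ∑ₐ i(J eₐ) i(eₐ) φ`. -/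
def Lam {q : ℕ} (J : V →ₗ[ℝ] V) (e : OrthonormalBasis (Fin q) ℝ V)
    {n : ℕ} (φ : Form V (n + 2)) : Form V n :=
  (-(1 / 2 : ℝ)) • ∑ a, iprodS (J (e a)) (iprodS (e a) φ)

/-!
Write `A ∧ φ` for the wedge product given by `AlternatingMap.domCoprod`. Alternating the
unalternated product `A(v₀, …, v_k) φ(v_{k+1}, …)` in two ways — over all permutations, or first
over the position of `v₀` and then over the rest — gives
`(k + 1) • (A ∧ φ) = alternatizeUncurryFin (x ↦ i(x)A ∧ φ)`. Contracting an `alternatizeUncurryFin`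
satisfies a Leibniz rule, whence `i(X)(ω ∧ φ) = ω(X) φ - ω ∧ i(X)φ` and
`i(X)(Ω ∧ φ) = i(X)Ω ∧ φ + Ω ∧ i(X)φ`. As `i(X)Ω = -(JX)♭`, the latter is the first commutator.
Forms of positive degree are determined by their contractions, so induction on the degree shows
that `L` commutes with `ε(X♭)`. For `Λ`, expand in the orthonormal basis: contractions
anticommute, and `∑ₐ ⟪X, eₐ⟫ i(J eₐ) = i(JX)`, `∑ₐ ⟪X, J eₐ⟫ i(eₐ) = -i(JX)` because `J` is
skew-adjoint.
-/

open Equiv Fin AlternatingMap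

theorem Equiv.Perm.sum_fin_succ {n : ℕ} {β : Type*} [AddCommMonoid β]
    (f : Perm (Fin (n + 1)) → β) :
    ∑ τ, f τ = ∑ p : Fin (n + 1), ∑ σ : Perm (Fin n),
      f (p.cycleRange.symm * Perm.decomposeFin.symm (0, σ)) := by
  let g : Fin (n + 1) × Perm (Fin n) → Perm (Fin (n + 1)) := fun pσ =>
    pσ.1.cycleRange.symm * Perm.decomposeFin.symm (0, pσ.2)
  have hg : Function.Bijective g := by
    refine (Fintype.bijective_iff_injective_and_card _).2 ⟨?_, ?_⟩
    · rintro ⟨p, σ⟩ ⟨p', σ'⟩ h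
      have hp : p = p' := by simpa [g] using congr($h 0)
      subst hp
      simpa [g] using h
    · simp [Fintype.card_perm, Nat.factorial_succ]
  rw [← Fintype.sum_prod_type']
  exact (Fintype.sum_bijective g hg _ _ fun _ => rfl).symm

theorem Fin.apply_cycleRange_symm_mul_decomposeFin {n : ℕ} {α : Type*} (v : Fin (n + 1) → α)
    (p : Fin (n + 1)) (σ : Perm (Fin n)) :
    (fun i => v ((p.cycleRange.symm * Perm.decomposeFin.symm (0, σ)) i)) =
      Fin.cons (v p) (fun i => p.removeNth v (σ i)) := by
  ext i
  cases i using Fin.cases <;> simp [removeNth_apply]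

theorem MultilinearMap.alternatization_domDomCongr {R M N ι ι' : Type*} [Semiring R]
    [AddCommMonoid M] [AddCommGroup N] [Module R M] [Module R N] [Fintype ι] [DecidableEq ι]
    [Fintype ι'] [DecidableEq ι'] (σ : ι ≃ ι') (f : MultilinearMap R (fun _ : ι => M) N) :
    alternatization (f.domDomCongr σ) = (alternatization f).domDomCongr σ := by
  ext v
  simp only [alternatization_apply, domDomCongr_apply, AlternatingMap.domDomCongr_apply]
  refine (Fintype.sum_equiv σ.permCongr _ _ fun τ => ?_).symm
  simp [Equiv.permCongr_apply]

namespace AlternatingMap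

variable {R M N : Type*} [CommRing R] [AddCommGroup M] [AddCommGroup N] [Module R M] [Module R N]
  {n : ℕ}

theorem alternatization_eq_alternatizeUncurryFin
    (f : MultilinearMap R (fun _ : Fin (n + 1) => M) N)
    (G : M → MultilinearMap R (fun _ : Fin n => M) N) (hf : ∀ v, f v = G (v 0) (tail v))
    (g : M →ₗ[R] M [⋀^Fin n]→ₗ[R] N) (hg : ∀ x, MultilinearMap.alternatization (G x) = g x) :
    MultilinearMap.alternatization f = alternatizeUncurryFin g := by
  ext v
  simp only [MultilinearMap.alternatization_apply, alternatizeUncurryFin_apply, ← hg,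
    MultilinearMap.domDomCongr_apply, Finset.smul_sum]
  rw [Perm.sum_fin_succ]
  refine Fintype.sum_congr _ _ fun p => Fintype.sum_congr _ _ fun σ => ?_
  rw [apply_cycleRange_symm_mul_decomposeFin, hf]
  simp [Perm.sign_mul, Units.smul_def, mul_smul]

theorem alternatizeUncurryFin_sub (f g : M →ₗ[R] M [⋀^Fin n]→ₗ[R] N) :
    alternatizeUncurryFin (f - g) = alternatizeUncurryFin f - alternatizeUncurryFin g :=
  map_sub alternatizeUncurryFinLM f g

theorem curryLeft_alternatizeUncurryFin (g : M →ₗ[R] M [⋀^Fin (n + 1)]→ₗ[R] N) (x : M) :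
    (alternatizeUncurryFin g).curryLeft x =
      g x - alternatizeUncurryFin (curryLeftLinearMap.flip x ∘ₗ g) := by
  ext v
  have hremove : ∀ j : Fin (n + 1),
      j.succ.removeNth (Matrix.vecCons x v) = Matrix.vecCons x (j.removeNth v) := by
    intro j
    ext i
    cases i using Fin.cases <;> simp [removeNth_apply]
  rw [curryLeft_apply_apply, sub_apply, alternatizeUncurryFin_apply, alternatizeUncurryFin_apply,
    Fin.sum_univ_succ, sub_eq_add_neg, ← Finset.sum_neg_distrib]
  simp [hremove, pow_succ]

theorem curryLeft_alternatizeUncurryFin_zero (g : M →ₗ[R] M [⋀^Fin 0]→ₗ[R] N) (x : M) :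
    (alternatizeUncurryFin g).curryLeft x = g x := by
  ext v
  simp [alternatizeUncurryFin_apply]

end AlternatingMap

section Wedge

variable {k n : ℕ}

def wedgeₗ : Form V k →ₗ[ℝ] Form V n →ₗ[ℝ] Form V (n + k) :=
  (TensorProduct.mk ℝ _ _).compr₂
    ((domDomCongrₗ ℝ (finSumFinEquiv.trans (finCongr (Nat.add_comm k n)))).toLinearMap ∘ₗ
      LinearMap.compAlternatingMapₗ ℝ (TensorProduct.lid ℝ ℝ).toLinearMap ∘ₗ domCoprod')

theorem eps_eq_wedgeₗ (ω : Form V 1) (φ : Form V n) : eps ω φ = wedgeₗ ω φ := rfl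

theorem wedge2_eq_wedgeₗ (Ω : Form V 2) (φ : Form V n) : wedge2 Ω φ = wedgeₗ Ω φ := rfl

def formTensor (A : Form V k) (φ : Form V n) : MultilinearMap ℝ (fun _ : Fin (n + k) => V) ℝ :=
  ((TensorProduct.lid ℝ ℝ).toLinearMap.compMultilinearMap
    (MultilinearMap.domCoprod A.toMultilinearMap φ.toMultilinearMap)).domDomCongr
      (finSumFinEquiv.trans (finCongr (Nat.add_comm k n)))

theorem formTensor_apply (A : Form V k) (φ : Form V n) (w : Fin (n + k) → V) :
    formTensor A φ w =
      A (fun t => w (Fin.cast (Nat.add_comm k n) (castAdd n t))) * φ (fun j => w (j.addNat k)) := by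
  simp [formTensor]

theorem alternatization_formTensor (A : Form V k) (φ : Form V n) :
    MultilinearMap.alternatization (formTensor A φ) =
      (k.factorial * n.factorial) • wedgeₗ A φ := by
  rw [formTensor, MultilinearMap.alternatization_domDomCongr,
    LinearMap.compMultilinearMap_alternatization, MultilinearMap.domCoprod_alternization_eq]
  simp [wedgeₗ]

theorem formTensor_apply_eq_curryLeft (A : Form V (k + 1)) (φ : Form V n)
    (w : Fin (n + k + 1) → V) :
    formTensor A φ w = formTensor (A.curryLeft (w 0)) φ (tail w) := by
  rw [formTensor_apply, formTensor_apply, curryLeft_apply_apply]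
  congr 2
  ext t
  cases t using Fin.cases <;> rfl

theorem alternatizeUncurryFin_wedgeₗ (A : Form V (k + 1)) (φ : Form V n) :
    alternatizeUncurryFin (wedgeₗ.flip φ ∘ₗ A.curryLeft) = (k + 1) • wedgeₗ A φ := by
  have h1 := alternatization_eq_alternatizeUncurryFin (n := n + k) (formTensor (k := k + 1) A φ)
    (fun x => formTensor (A.curryLeft x) φ) (formTensor_apply_eq_curryLeft A φ)
    ((k.factorial * n.factorial) • (wedgeₗ.flip φ ∘ₗ A.curryLeft))
    (fun x => by simp [alternatization_formTensor])
  -- `alternatization_formTensor A φ`, elaborated at the index type `Fin (n + k + 1)` of `h1`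
  have h2 : MultilinearMap.alternatization
      (formTensor (k := k + 1) A φ : MultilinearMap ℝ (fun _ : Fin (n + k + 1) => V) ℝ) =
      ((k + 1).factorial * n.factorial) • wedgeₗ A φ :=
    alternatization_formTensor A φ
  rw [h2, alternatizeUncurryFin_smul, Nat.factorial_succ] at h1
  refine smul_right_injective _ (by positivity : k.factorial * n.factorial ≠ 0) ?_
  simp only [← h1, smul_smul]
  ring_nf

theorem wedgeₗ_of_isEmpty (c : Form V 0) (φ : Form V n) : wedgeₗ c φ = c 0 • φ := by
  refine smul_right_injective _ n.factorial_ne_zero ?_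
  have hprod : formTensor c φ = (c 0 • LinearMap.id).compMultilinearMap φ.toMultilinearMap := by
    ext w
    rw [formTensor_apply]
    simp only [Nat.add_zero, Matrix.zero_empty, LinearMap.smul_compMultilinearMap,
      LinearMap.id_compMultilinearMap, _root_.smul_apply, coe_multilinearMap, smul_eq_mul]
    exact congr_arg₂ _ (congrArg c (Subsingleton.elim _ _)) rfl
  have h := alternatization_formTensor c φ
  rw [hprod, LinearMap.compMultilinearMap_alternatization, coe_alternatization,
    Nat.factorial_zero, one_mul] at h
  show n.factorial • wedgeₗ c φ = n.factorial • (c 0 • φ)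
  rw [← h]
  ext w
  simp

theorem eps_neg_left (ω : Form V 1) (φ : Form V n) : eps (-ω) φ = -eps ω φ := by
  simp only [eps_eq_wedgeₗ, map_neg, LinearMap.neg_apply]

end Wedge

section Interior

variable {n : ℕ}

theorem iprodS_eq_curryLeft (X : V) (φ : Form V (n + 1)) : iprodS X φ = φ.curryLeft X := rfl

theorem iprodS_neg (X : V) (φ : Form V (n + 1)) : iprodS X (-φ) = -iprodS X φ := rfl

theorem iprodS_sub (X : V) (φ ψ : Form V (n + 1)) :
    iprodS X (φ - ψ) = iprodS X φ - iprodS X ψ := rfl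

theorem iprodS_smul (c : ℝ) (X : V) (φ : Form V (n + 1)) : iprodS X (c • φ) = c • iprodS X φ :=
  rfl

theorem iprodS_sum {ι : Type*} (s : Finset ι) (φ : ι → Form V (n + 1)) (X : V) :
    iprodS X (∑ a ∈ s, φ a) = ∑ a ∈ s, iprodS X (φ a) :=
  map_sum (curryLeftLinearMap.flip X) φ s

theorem ext_iprodS {α β : Form V (n + 1)} (h : ∀ X, iprodS X α = iprodS X β) : α = β := by
  ext v
  convert congr($(h (v 0)) (tail v)) using 1 <;> exact congrArg _ (Fin.cons_self_tail v).symm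

theorem iprodS_iprodS (X Y : V) (φ : Form V (n + 2)) :
    iprodS X (iprodS Y φ) = -iprodS Y (iprodS X φ) := by
  have h := curryLeft_same φ (X + Y)
  simp only [map_add, curryLeft_add, LinearMap.add_apply, curryLeft_same, zero_add,
    add_zero] at h
  simpa [iprodS_eq_curryLeft, eq_neg_iff_add_eq_zero, add_comm] using h

theorem form2_apply_swap (Ω : Form V 2) (x y : V) : Ω ![x, y] = -Ω ![y, x] := by
  simpa [iprodS_eq_curryLeft] using congr($(iprodS_iprodS y x Ω) 0)

theorem eps_eq_alternatizeUncurryFin (ω : Form V 1) (φ : Form V n) :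
    eps ω φ = alternatizeUncurryFin (wedgeₗ.flip φ ∘ₗ ω.curryLeft) :=
  ((alternatizeUncurryFin_wedgeₗ ω φ).trans (one_smul ℕ _)).symm

theorem two_nsmul_wedge2 (Ω : Form V 2) (φ : Form V n) :
    2 • wedge2 Ω φ = alternatizeUncurryFin (wedgeₗ.flip φ ∘ₗ Ω.curryLeft) :=
  (alternatizeUncurryFin_wedgeₗ Ω φ).symm

theorem iprodS_eps (ω : Form V 1) (φ : Form V (n + 1)) (X : V) :
    iprodS X (eps ω φ) = ω ![X] • φ - eps ω (iprodS X φ) := by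
  have hcomp : curryLeftLinearMap.flip X ∘ₗ wedgeₗ.flip φ ∘ₗ ω.curryLeft =
      wedgeₗ.flip (φ.curryLeft X) ∘ₗ ω.curryLeft := by
    ext x : 1
    simp [wedgeₗ_of_isEmpty]
  rw [iprodS_eq_curryLeft, eps_eq_alternatizeUncurryFin, curryLeft_alternatizeUncurryFin, hcomp,
    ← eps_eq_alternatizeUncurryFin]
  simp [wedgeₗ_of_isEmpty, iprodS_eq_curryLeft]

theorem iprodS_eps_of_isEmpty (ω : Form V 1) (φ : Form V 0) (X : V) :
    iprodS X (eps ω φ) = ω ![X] • φ := by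
  rw [iprodS_eq_curryLeft, eps_eq_alternatizeUncurryFin, curryLeft_alternatizeUncurryFin_zero]
  simp [wedgeₗ_of_isEmpty]

theorem curryLeft_comp_wedgeₗ_flip_comp_curryLeft (Ω : Form V 2) (φ : Form V (n + 1)) (X : V) :
    curryLeftLinearMap.flip X ∘ₗ wedgeₗ.flip φ ∘ₗ Ω.curryLeft =
      wedgeₗ.flip φ ∘ₗ (-iprodS X Ω).curryLeft - wedgeₗ.flip (iprodS X φ) ∘ₗ Ω.curryLeft := by
  ext x : 1
  have h := iprodS_eps (iprodS x Ω) φ X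
  simp only [iprodS_eq_curryLeft, eps_eq_wedgeₗ] at h
  simp [h, wedgeₗ_of_isEmpty, iprodS_eq_curryLeft, form2_apply_swap Ω x X]

theorem iprodS_wedge2 (Ω : Form V 2) (φ : Form V (n + 1)) (X : V) :
    iprodS X (wedge2 Ω φ) = eps (iprodS X Ω) φ + wedge2 Ω (iprodS X φ) := by
  refine smul_right_injective _ two_ne_zero ?_
  calc 2 • iprodS X (wedge2 Ω φ)
      _ = iprodS X (alternatizeUncurryFin (wedgeₗ.flip φ ∘ₗ Ω.curryLeft)) := by
        rw [← two_nsmul_wedge2]; rfl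
      _ = eps (iprodS X Ω) φ - (eps (-iprodS X Ω) φ - 2 • wedge2 Ω (iprodS X φ)) := by
        rw [iprodS_eq_curryLeft, curryLeft_alternatizeUncurryFin,
          curryLeft_comp_wedgeₗ_flip_comp_curryLeft, alternatizeUncurryFin_sub,
          ← eps_eq_alternatizeUncurryFin, ← two_nsmul_wedge2]
        rfl
      _ = 2 • (eps (iprodS X Ω) φ + wedge2 Ω (iprodS X φ)) := by
        rw [eps_neg_left]
        module

theorem iprodS_wedge2_of_isEmpty (Ω : Form V 2) (φ : Form V 0) (X : V) :
    iprodS X (wedge2 Ω φ) = eps (iprodS X Ω) φ := by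
  have hcomp : curryLeftLinearMap.flip X ∘ₗ wedgeₗ.flip φ ∘ₗ Ω.curryLeft =
      wedgeₗ.flip φ ∘ₗ (-iprodS X Ω).curryLeft := by
    ext x : 1
    have h := iprodS_eps_of_isEmpty (iprodS x Ω) φ X
    simp only [iprodS_eq_curryLeft, eps_eq_wedgeₗ] at h
    simp [h, wedgeₗ_of_isEmpty, iprodS_eq_curryLeft, form2_apply_swap Ω x X]
  refine smul_right_injective _ two_ne_zero ?_
  calc 2 • iprodS X (wedge2 Ω φ)
      _ = iprodS X (alternatizeUncurryFin (wedgeₗ.flip φ ∘ₗ Ω.curryLeft)) := by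
        rw [← two_nsmul_wedge2]; rfl
      _ = eps (iprodS X Ω) φ - eps (-iprodS X Ω) φ := by
        rw [iprodS_eq_curryLeft, curryLeft_alternatizeUncurryFin, hcomp,
          ← eps_eq_alternatizeUncurryFin]
        rfl
      _ = 2 • eps (iprodS X Ω) φ := by
        rw [eps_neg_left]
        module

theorem eps_eps (η ξ : Form V 1) (φ : Form V n) : eps η (eps ξ φ) = -eps ξ (eps η φ) := by
  induction n with
  | zero =>
    refine ext_iprodS fun Y => ?_
    rw [iprodS_neg, iprodS_eps, iprodS_eps, iprodS_eps_of_isEmpty, iprodS_eps_of_isEmpty]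
    simp only [eps_eq_wedgeₗ, map_smul]
    module
  | succ n ih =>
    refine ext_iprodS fun Y => ?_
    rw [iprodS_neg, iprodS_eps, iprodS_eps, iprodS_eps, iprodS_eps]
    simp only [eps_eq_wedgeₗ] at ih ⊢
    simp only [map_smul, map_sub, ih]
    module

theorem wedge2_eps (Ω : Form V 2) (ξ : Form V 1) (φ : Form V n) :
    wedge2 Ω (eps ξ φ) = eps ξ (wedge2 Ω φ) := by
  induction n with
  | zero =>
    refine ext_iprodS fun Y => ?_
    rw [iprodS_wedge2, iprodS_eps, iprodS_eps_of_isEmpty, iprodS_wedge2_of_isEmpty, eps_eps]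
    simp only [wedge2_eq_wedgeₗ, eps_eq_wedgeₗ, map_smul]
    module
  | succ n ih =>
    refine ext_iprodS fun Y => ?_
    rw [iprodS_wedge2, iprodS_eps, iprodS_eps, iprodS_wedge2, eps_eps]
    simp only [wedge2_eq_wedgeₗ, eps_eq_wedgeₗ] at ih ⊢
    simp only [map_smul, map_sub, map_add, ih]
    module

end Interior

section Kaehler

variable {n q : ℕ}

theorem flat_apply (X Y : V) : flat X ![Y] = ⟪X, Y⟫ := rfl

theorem inner_map_right_eq_neg {J : V →ₗ[ℝ] V} (hJO : ∀ x y : V, ⟪J x, J y⟫ = ⟪x, y⟫)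
    (hJ2 : ∀ x : V, J (J x) = -x) (x y : V) : ⟪x, J y⟫ = -⟪J x, y⟫ := by
  rw [← hJO x (J y), hJ2, inner_neg_right]

theorem iprodS_Kform (J : V →ₗ[ℝ] V) (hJO : ∀ x y : V, ⟪J x, J y⟫ = ⟪x, y⟫)
    (hJ2 : ∀ x : V, J (J x) = -x) (X : V) : iprodS X (Kform J hJO hJ2) = -flat (J X) := by
  ext v
  simp [iprodS_eq_curryLeft, Kform, flat, inner_map_right_eq_neg hJO hJ2]

theorem OrthonormalBasis.sum_inner_smul_map {ι W : Type*} [Fintype ι] [AddCommGroup W]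
    [Module ℝ W] (e : OrthonormalBasis ι ℝ V) (T : V →ₗ[ℝ] W) (X : V) :
    ∑ a, ⟪X, e a⟫ • T (e a) = T X := by
  conv_rhs => rw [← e.sum_repr' X]
  simp [real_inner_comm]

theorem Lam_iprodS (J : V →ₗ[ℝ] V) (e : OrthonormalBasis (Fin q) ℝ V) (X : V)
    (φ : Form V (n + 3)) : Lam J e (iprodS X φ) = iprodS X (Lam J e φ) := by
  simp only [Lam, iprodS_smul, iprodS_sum]
  congr 2 with a
  rw [iprodS_iprodS (e a) X, iprodS_neg, iprodS_iprodS (J (e a)) X, neg_neg]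

theorem sum_flat_smul_iprodS_sub {J : V →ₗ[ℝ] V} (hJ : ∀ x y : V, ⟪x, J y⟫ = -⟪J x, y⟫)
    (e : OrthonormalBasis (Fin q) ℝ V) (X : V) (φ : Form V (n + 1)) :
    ∑ a, (flat X ![e a] • iprodS (J (e a)) φ - flat X ![J (e a)] • iprodS (e a) φ) =
      (2 : ℝ) • iprodS (J X) φ := by
  have h1 := e.sum_inner_smul_map (curryLeftLinearMap φ ∘ₗ J) X
  have h2 := e.sum_inner_smul_map (curryLeftLinearMap φ) (-J X)
  simp only [flat_apply, hJ X, Finset.sum_sub_distrib, inner_neg_left] at h1 h2 ⊢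
  simp only [LinearMap.comp_apply, curryLeftLinearMap_apply, map_neg] at h1 h2
  simp only [iprodS_eq_curryLeft, h1, h2]
  module

theorem Lam_eps_flat {J : V →ₗ[ℝ] V} (hJ : ∀ x y : V, ⟪x, J y⟫ = -⟪J x, y⟫)
    (e : OrthonormalBasis (Fin q) ℝ V) (X : V) (φ : Form V (n + 2)) :
    Lam J e (eps (flat X) φ) = eps (flat X) (Lam J e φ) - iprodS (J X) φ := by
  have hterm : ∀ a, iprodS (J (e a)) (iprodS (e a) (eps (flat X) φ)) =
      (flat X ![e a] • iprodS (J (e a)) φ - flat X ![J (e a)] • iprodS (e a) φ) +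
        eps (flat X) (iprodS (J (e a)) (iprodS (e a) φ)) := by
    intro a
    rw [iprodS_eps, iprodS_sub, iprodS_smul, iprodS_eps]
    abel
  simp only [Lam, hterm, Finset.sum_add_distrib, sum_flat_smul_iprodS_sub hJ]
  simp only [eps_eq_wedgeₗ, map_sum, map_smul]
  module

theorem Lam_eps_flat_of_one {J : V →ₗ[ℝ] V} (hJ : ∀ x y : V, ⟪x, J y⟫ = -⟪J x, y⟫)
    (e : OrthonormalBasis (Fin q) ℝ V) (X : V) (φ : Form V 1) :
    Lam J e (eps (flat X) φ) = -iprodS (J X) φ := by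
  have hterm : ∀ a, iprodS (J (e a)) (iprodS (e a) (eps (flat X) φ)) =
      flat X ![e a] • iprodS (J (e a)) φ - flat X ![J (e a)] • iprodS (e a) φ := by
    intro a
    rw [iprodS_eps, iprodS_sub, iprodS_smul, iprodS_eps_of_isEmpty]
  simp only [Lam, hterm, sum_flat_smul_iprodS_sub hJ]
  module

end Kaehler

theorem commutators_L_Lam_interior_exterior_general
    {m : ℕ}
    (J : V →ₗ[ℝ] V) (hJO : ∀ x y : V, ⟪J x, J y⟫ = ⟪x, y⟫)
    (hJ2 : ∀ x : V, J (J x) = -x)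
    (e : OrthonormalBasis (Fin (2 * m)) ℝ V) :
    (∀ (r : ℕ) (φ : Form V (r + 1)) (X : V),
        Lop (Kform J hJO hJ2) (iprodS X φ) - iprodS X (Lop (Kform J hJO hJ2) φ) =
          eps (flat (J X)) φ) ∧
    (∀ (φ : Form V 0) (X : V),
        -iprodS X (Lop (Kform J hJO hJ2) φ) = eps (flat (J X)) φ) ∧
    (∀ (r : ℕ) (φ : Form V r) (X : V),
        Lop (Kform J hJO hJ2) (eps (flat X) φ) - eps (flat X) (Lop (Kform J hJO hJ2) φ) = 0) ∧
    (∀ (r : ℕ) (φ : Form V (r + 3)) (X : V),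
        Lam J e (iprodS X φ) - iprodS X (Lam J e φ) = 0) ∧
    (∀ (r : ℕ) (φ : Form V (r + 2)) (X : V),
        Lam J e (eps (flat X) φ) - eps (flat X) (Lam J e φ) = -iprodS (J X) φ) ∧
    (∀ (φ : Form V 1) (X : V),
        Lam J e (eps (flat X) φ) = -iprodS (J X) φ) := by
  have hJ := inner_map_right_eq_neg hJO hJ2
  refine ⟨fun r φ X => ?_, fun φ X => ?_, fun r φ X => ?_, fun r φ X => ?_, fun r φ X => ?_,
    fun φ X => Lam_eps_flat_of_one hJ e X φ⟩
  · rw [Lop, Lop, iprodS_wedge2, iprodS_Kform, eps_neg_left]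
    abel
  · rw [Lop, iprodS_wedge2_of_isEmpty, iprodS_Kform, eps_neg_left, neg_neg]
  · rw [Lop, Lop, wedge2_eps, sub_self]
  · rw [Lam_iprodS, sub_self]
  · rw [Lam_eps_flat hJ]
    abel

/-- The commutator identities `[L, i(X)] = ε((JX)♭)`,
`[L, ε(X♭)] = 0`, `[Λ, i(X)] = 0` and `[Λ, ε(X♭)] = -i(JX)`, for every `X ∈ V`
and every form `φ`; in the degenerate low degrees (where `i(X)` or `Λ` vanishes
for degree reasons) the corresponding term is omitted. -/
theorem commutators_L_Lam_interior_exterior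
    {m : ℕ} (hm : 1 ≤ m)
    (J : V →ₗ[ℝ] V) (hJO : ∀ x y : V, ⟪J x, J y⟫ = ⟪x, y⟫)
    (hJ2 : ∀ x : V, J (J x) = -x)
    (e : OrthonormalBasis (Fin (2 * m)) ℝ V) :
    (∀ (r : ℕ) (φ : Form V (r + 1)) (X : V),
        Lop (Kform J hJO hJ2) (iprodS X φ) - iprodS X (Lop (Kform J hJO hJ2) φ) =
          eps (flat (J X)) φ) ∧
    (∀ (φ : Form V 0) (X : V),
        -iprodS X (Lop (Kform J hJO hJ2) φ) = eps (flat (J X)) φ) ∧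
    (∀ (r : ℕ) (φ : Form V r) (X : V),
        Lop (Kform J hJO hJ2) (eps (flat X) φ) - eps (flat X) (Lop (Kform J hJO hJ2) φ) = 0) ∧
    (∀ (r : ℕ) (φ : Form V (r + 3)) (X : V),
        Lam J e (iprodS X φ) - iprodS X (Lam J e φ) = 0) ∧
    (∀ (r : ℕ) (φ : Form V (r + 2)) (X : V),
        Lam J e (eps (flat X) φ) - eps (flat X) (Lam J e φ) = -iprodS (J X) φ) ∧
    (∀ (φ : Form V 1) (X : V),
        Lam J e (eps (flat X) φ) = -iprodS (J X) φ) :=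
  commutators_L_Lam_interior_exterior_general J hJO hJ2 e

end
end

section
/- For an algebraic Kähler curvature tensor R acting on r-forms, one has Σ_a R_+(Je_a)(i(e_a)φ) = 0, i.e. Σ_{a,b} θ^b ∧ (R(Je_a, e_b)(i(e_a)φ)) = 0, for every r-form φ. -/
open scoped RealInnerProductSpace
open Finset

noncomputable section

variable {V : Type*} [NormedAddCommGroup V] [InnerProductSpace ℝ V]

/-- The Ricci endomorphism `ρ(X) = ∑ₐ R(X, eₐ) eₐ`. -/
def ric {q : ℕ} (R : V →ₗ[ℝ] V →ₗ[ℝ] (V →ₗ[ℝ] V))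
    (e : OrthonormalBasis (Fin q) ℝ V) (X : V) : V :=
  ∑ a, R X (e a) (e a)

/-- `R₊(X) φ = ∑ₐ θᵃ ∧ (R(X, eₐ) φ)`. -/
def Rp {q : ℕ} (act : ∀ n : ℕ, (V →ₗ[ℝ] V) → Form V n → Form V n)
    (R : V →ₗ[ℝ] V →ₗ[ℝ] (V →ₗ[ℝ] V)) (e : OrthonormalBasis (Fin q) ℝ V)
    {n : ℕ} (X : V) (φ : Form V n) : Form V (n + 1) :=
  ∑ a, eps (flat (e a)) (act n (R X (e a)) φ)

/-- `R₋(X) φ = ∑ₐ i(eₐ) (R(X, eₐ) φ)`. -/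
def Rm {q : ℕ} (act : ∀ n : ℕ, (V →ₗ[ℝ] V) → Form V n → Form V n)
    (R : V →ₗ[ℝ] V →ₗ[ℝ] (V →ₗ[ℝ] V)) (e : OrthonormalBasis (Fin q) ℝ V)
    {n : ℕ} (X : V) (φ : Form V (n + 1)) : Form V n :=
  ∑ a, iprodS (e a) (act (n + 1) (R X (e a)) φ)

/-- The curvature endomorphism `F(φ) = ∑_{a,b} θᵃ ∧ i(e_b) (R(e_b, eₐ) φ)`. -/
def Fop {q : ℕ} (act : ∀ n : ℕ, (V →ₗ[ℝ] V) → Form V n → Form V n)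
    (R : V →ₗ[ℝ] V →ₗ[ℝ] (V →ₗ[ℝ] V)) (e : OrthonormalBasis (Fin q) ℝ V)
    {n : ℕ} (φ : Form V (n + 1)) : Form V (n + 1) :=
  ∑ a, ∑ b, eps (flat (e a)) (iprodS (e b) (act (n + 1) (R (e b) (e a)) φ))

/-!
Both ingredients of `R₊` are alternations in the sense of `AlternatingMap.alternatizeUncurryFin`:
`∑ b, θᵇ ∧ F(e_b) = alternatizeUncurryFin F` for every linear `F`, and a derivation acts on a form
`ψ` of positive degree by `A • ψ = -alternatizeUncurryFin (ψ.curryLeft ∘ₗ A)`. Hence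
`∑ₐ R₊(J eₐ)(i(eₐ)φ)` is minus the double alternation of `B(X, Y) = ∑ₐ i(R(J eₐ, X) Y) i(eₐ) φ`,
which vanishes as soon as `B` is symmetric. By the Bianchi identity and `J`-invariance,
`B(X, Y) - B(Y, X) = ∑ₐ i(J R(Y, X) eₐ) i(eₐ) φ`: the contraction of the symmetric endomorphism
`J ∘ R(Y, X)` against the alternating pairing `(x, y) ↦ i(x) i(y) φ`, which is zero.
-/

open AlternatingMap Equiv

instance AlternatingMap.instIsZeroApply {R M N ι : Type*} [Semiring R] [AddCommMonoid M]
    [Module R M] [AddCommMonoid N] [Module R N] : IsZeroApply (M [⋀^ι]→ₗ[R] N) (ι → M) N :=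
  ⟨fun _ => rfl⟩

instance AlternatingMap.instIsAddApply {R M N ι : Type*} [Semiring R] [AddCommMonoid M]
    [Module R M] [AddCommMonoid N] [Module R N] : IsAddApply (M [⋀^ι]→ₗ[R] N) (ι → M) N :=
  ⟨fun _ _ _ => rfl⟩

lemma AlternatingMap.alternatizeUncurryFin_neg {R M N : Type*} [CommRing R] [AddCommGroup M]
    [Module R M] [AddCommGroup N] [Module R N] {n : ℕ} (f : M →ₗ[R] M [⋀^Fin n]→ₗ[R] N) :
    alternatizeUncurryFin (-f) = -alternatizeUncurryFin f := by
  ext v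
  simp [alternatizeUncurryFin_apply]

lemma AlternatingMap.alternatizeUncurryFin_curryLeft_comp_apply {R M N : Type*} [CommRing R]
    [AddCommGroup M] [Module R M] [AddCommGroup N] [Module R N] {n : ℕ}
    (ψ : M [⋀^Fin (n + 1)]→ₗ[R] N) (A : M →ₗ[R] M) (v : Fin (n + 1) → M) :
    alternatizeUncurryFin (ψ.curryLeft ∘ₗ A) v = ∑ k, ψ (Function.update v k (A (v k))) := by
  rw [alternatizeUncurryFin_apply]
  refine Finset.sum_congr rfl fun k _ => ?_
  rw [← Fin.insertNth_removeNth, map_insertNth]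
  rfl

lemma Equiv.Perm.ModSumCongr.bijective_mk_of_apply_inl {ι : Type*} {n : ℕ}
    (σ₀ : Fin 1 ⊕ Fin n ≃ ι) (π : ι → Perm (Fin 1 ⊕ Fin n))
    (hπ : ∀ j i, σ₀ (π j (.inl i)) = j) :
    Function.Bijective fun j => (Quotient.mk'' (π j) : Perm.ModSumCongr (Fin 1) (Fin n)) := by
  constructor
  · intro j j' h
    obtain ⟨⟨τ₁, τ₂⟩, hτ⟩ := QuotientGroup.leftRel_apply.mp (Quotient.exact' h)
    have hτ₁ := congrArg (· (Sum.inl 0)) hτ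
    simp only [Perm.sumCongrHom_apply, Perm.sumCongr_apply, Sum.map_inl] at hτ₁
    rw [← hπ j (τ₁ 0), hτ₁, Perm.mul_apply, Perm.inv_def, apply_symm_apply, hπ]
  · intro q
    induction q using Quotient.inductionOn' with
    | h σ =>
      refine ⟨σ₀ (σ (.inl 0)), Quotient.sound' (QuotientGroup.leftRel_apply.mpr ?_)⟩
      refine Perm.mem_sumCongrHom_range_of_perm_mapsTo_inl ?_
      rintro _ ⟨i, rfl⟩
      refine ⟨0, ?_⟩
      rw [Perm.mul_apply, Subsingleton.elim i 0, Perm.eq_inv_iff_eq, ← σ₀.apply_eq_iff_eq, hπ]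

lemma eps_apply {n : ℕ} (ω : Form V 1) (ψ : Form V n) (v : Fin (n + 1) → V) :
    eps ω ψ v = ∑ j : Fin (n + 1), (-1 : ℤ) ^ (j : ℕ) • (ω (fun _ => v j) * ψ (j.removeNth v)) := by
  rw [eps, AlternatingMap.domDomCongr_apply, LinearMap.compAlternatingMap_apply,
    AlternatingMap.domCoprod_apply, _root_.sum_apply, map_sum]
  set σ₀ : Fin 1 ⊕ Fin n ≃ Fin (n + 1) := finSumFinEquiv.trans (finCongr (Nat.add_comm 1 n))
  -- `π j` is the shuffle moving the argument of `ω` to slot `j`; these represent all cosets.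
  let π (j : Fin (n + 1)) : Perm (Fin 1 ⊕ Fin n) := permCongr σ₀.symm (Fin.cycleRange j).symm
  have hπl : ∀ j i, σ₀ (π j (.inl i)) = j := fun j i => by
    have hσ₀l : σ₀ (.inl i) = 0 := Fin.ext (by simp [σ₀])
    simp [π, permCongr_apply, hσ₀l]
  have hπr : ∀ j i, σ₀ (π j (.inr i)) = j.succAbove i := fun j i => by
    have hσ₀r : σ₀ (.inr i) = i.succ := Fin.ext (Nat.add_comm 1 i)
    simp [π, permCongr_apply, hσ₀r]
  have hsign : ∀ j, Perm.sign (π j) = (-1) ^ (j : ℕ) := fun j => by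
    rw [Perm.sign_permCongr, ← Perm.inv_def, Perm.sign_inv, Fin.sign_cycleRange]
  refine (Fintype.sum_bijective _ (Perm.ModSumCongr.bijective_mk_of_apply_inl σ₀ π hπl) _ _
    fun j => ?_).symm
  simp only [AlternatingMap.domCoprod.summand_mk'', _root_.smul_apply,
    MultilinearMap.domDomCongr_apply, MultilinearMap.domCoprod_apply,
    AlternatingMap.coe_multilinearMap, Function.comp_apply, hsign, hπl, hπr]
  rw [Units.smul_def, map_zsmul, LinearEquiv.coe_coe, TensorProduct.lid_tmul, smul_eq_mul]
  push_cast
  rfl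

lemma sum_eps_flat {ι : Type*} [Fintype ι] (e : OrthonormalBasis ι ℝ V) {n : ℕ}
    (F : V →ₗ[ℝ] Form V n) :
    ∑ b, eps (flat (e b)) (F (e b)) = alternatizeUncurryFin F := by
  ext v
  have hF : ∀ x : V, F x = ∑ b, ⟪e b, x⟫ • F (e b) := fun x => by
    conv_lhs => rw [← e.sum_repr' x]
    simp only [map_sum, map_smul]
  simp only [alternatizeUncurryFin_apply, _root_.sum_apply, eps_apply, hF (v _), Finset.smul_sum]
  rw [Finset.sum_comm]
  refine Finset.sum_congr rfl fun j _ => Finset.sum_congr rfl fun b _ => ?_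
  rw [AlternatingMap.smul_apply, smul_eq_mul]
  rfl

lemma OrthonormalBasis.sum_isAlt_isSymmetric_eq_zero {ι : Type*} [Fintype ι]
    (e : OrthonormalBasis ι ℝ V) {M : Type*} [AddCommGroup M] [Module ℝ M]
    {C : V →ₗ[ℝ] V →ₗ[ℝ] M} (hC : C.IsAlt) {A : V →ₗ[ℝ] V} (hA : A.IsSymmetric) :
    ∑ a, C (A (e a)) (e a) = 0 := by
  have expand : ∑ a, C (A (e a)) (e a) = ∑ a, ∑ c, ⟪e c, A (e a)⟫ • C (e c) (e a) := by
    refine Finset.sum_congr rfl fun a _ => ?_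
    conv_lhs => rw [← e.sum_repr' (A (e a))]
    simp only [map_sum, map_smul, LinearMap.sum_apply, LinearMap.smul_apply]
  have h : ∑ a, C (A (e a)) (e a) = -∑ a, C (A (e a)) (e a) := by
    calc ∑ a, C (A (e a)) (e a)
        = ∑ a, ∑ c, ⟪e a, A (e c)⟫ • -C (e a) (e c) := by
          rw [expand]
          refine Finset.sum_congr rfl fun a _ => Finset.sum_congr rfl fun c _ => ?_
          rw [← hA, real_inner_comm, hC.neg]
      _ = -∑ a, C (A (e a)) (e a) := by
          simp only [expand, smul_neg, Finset.sum_neg_distrib]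
          rw [Finset.sum_comm]
  rw [eq_neg_iff_add_eq_zero, ← two_smul ℝ] at h
  exact (smul_eq_zero.mp h).resolve_left two_ne_zero

section Derivation

variable {act : ∀ n : ℕ, (V →ₗ[ℝ] V) → Form V n → Form V n}
  (hact : ∀ (n : ℕ) (A : V →ₗ[ℝ] V) (φ : Form V n) (v : Fin n → V),
    act n A φ v = -∑ k, φ (Function.update v k (A (v k))))
  (R : V →ₗ[ℝ] V →ₗ[ℝ] (V →ₗ[ℝ] V)) {q : ℕ} (e : OrthonormalBasis (Fin q) ℝ V) (X : V)
include hact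

lemma Rp_eq_zero_of_degree_zero (ψ : Form V 0) : Rp act R e X ψ = 0 := by
  have hzero : ∀ Y, act 0 (R X Y) ψ = (0 : V →ₗ[ℝ] Form V 0) Y := fun Y => by
    ext v
    simp [hact]
  rw [Rp, Finset.sum_congr rfl fun b _ => by rw [hzero], sum_eps_flat,
    ← alternatizeUncurryFinLM_apply, _root_.map_zero]

lemma Rp_eq_neg_alternatizeUncurryFin {n : ℕ} (ψ : Form V (n + 1)) :
    Rp act R e X ψ =
      -alternatizeUncurryFin (alternatizeUncurryFinLM ∘ₗ (R X).compr₂ ψ.curryLeft) := by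
  have hR : ∀ Y, act (n + 1) (R X Y) ψ =
      (-(alternatizeUncurryFinLM ∘ₗ (R X).compr₂ ψ.curryLeft)) Y := fun Y => by
    ext v
    rw [hact, LinearMap.neg_apply, LinearMap.comp_apply, alternatizeUncurryFinLM_apply,
      AlternatingMap.neg_apply, ← alternatizeUncurryFin_curryLeft_comp_apply]
    rfl
  rw [Rp, Finset.sum_congr rfl fun b _ => by rw [hR], sum_eps_flat,
    alternatizeUncurryFin_neg]

end Derivation

section Kahler

variable {J : V →ₗ[ℝ] V} {R : V →ₗ[ℝ] V →ₗ[ℝ] (V →ₗ[ℝ] V)}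

lemma isSymmetric_comp_of_skew_of_comm (hJO : ∀ x y : V, ⟪J x, J y⟫ = ⟪x, y⟫)
    (hJ2 : ∀ x : V, J (J x) = -x) {T : V →ₗ[ℝ] V} (hT : ∀ u v : V, ⟪T u, v⟫ = -⟪u, T v⟫)
    (hTJ : ∀ v, T (J v) = J (T v)) : (J ∘ₗ T).IsSymmetric := fun u w => by
  have hJskew : ⟪J (T u), w⟫ = -⟪T u, J w⟫ := by
    rw [← hJO (T u) (J w), hJ2, inner_neg_right, neg_neg]
  rw [LinearMap.comp_apply, LinearMap.comp_apply, hJskew, hT, neg_neg, hTJ]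

lemma R_J_sub_R_J (hRskew : ∀ X Y : V, R X Y = -R Y X)
    (hRbianchi : ∀ X Y Z : V, R X Y Z + R Y Z X + R Z X Y = 0)
    (hRJ : ∀ X Y v : V, R X Y (J v) = J (R X Y v)) (u X Y : V) :
    R (J u) X Y - R (J u) Y X = J (R Y X u) := by
  have hb := hRbianchi (J u) X Y
  rw [hRJ, hRskew X Y, hRskew Y (J u)] at hb
  simp only [LinearMap.neg_apply, map_neg] at hb
  linear_combination (norm := module) hb

lemma sum_iprodS_R_J_comm (hJO : ∀ x y : V, ⟪J x, J y⟫ = ⟪x, y⟫) (hJ2 : ∀ x : V, J (J x) = -x)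
    (hRskew : ∀ X Y : V, R X Y = -R Y X)
    (hRskewadj : ∀ X Y u v : V, ⟪R X Y u, v⟫ = -⟪u, R X Y v⟫)
    (hRbianchi : ∀ X Y Z : V, R X Y Z + R Y Z X + R Z X Y = 0)
    (hRJ : ∀ X Y v : V, R X Y (J v) = J (R X Y v)) {ι : Type*} [Fintype ι]
    (e : OrthonormalBasis ι ℝ V) {n : ℕ} (φ : Form V (n + 2)) (X Y : V) :
    ∑ a, iprodS (R (J (e a)) X Y) (iprodS (e a) φ) =
      ∑ a, iprodS (R (J (e a)) Y X) (iprodS (e a) φ) := by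
  let C : V →ₗ[ℝ] V →ₗ[ℝ] Form V n := (curryLeftLinearMap ∘ₗ φ.curryLeft).flip
  have hC : C.IsAlt := curryLeft_same φ
  have hA := isSymmetric_comp_of_skew_of_comm hJO hJ2 (hRskewadj Y X) (hRJ Y X)
  rw [← sub_eq_zero, ← Finset.sum_sub_distrib, ← e.sum_isAlt_isSymmetric_eq_zero hC hA]
  refine Finset.sum_congr rfl fun a _ => ?_
  rw [LinearMap.comp_apply, ← R_J_sub_R_J hRskew hRbianchi hRJ]
  exact (map_sub (iprodS (e a) φ).curryLeft _ _).symm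

end Kahler

theorem sum_Rp_J_interior_eq_zero_general
    {m : ℕ}
    (J : V →ₗ[ℝ] V) (hJO : ∀ x y : V, ⟪J x, J y⟫ = ⟪x, y⟫)
    (hJ2 : ∀ x : V, J (J x) = -x)
    (e : OrthonormalBasis (Fin (2 * m)) ℝ V)
    (R : V →ₗ[ℝ] V →ₗ[ℝ] (V →ₗ[ℝ] V))
    (hRskew : ∀ X Y : V, R X Y = -R Y X)
    (hRskewadj : ∀ X Y u v : V, ⟪R X Y u, v⟫ = -⟪u, R X Y v⟫)
    (hRbianchi : ∀ X Y Z : V, R X Y Z + R Y Z X + R Z X Y = 0)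
    (hRJ : ∀ X Y v : V, R X Y (J v) = J (R X Y v))
    (act : ∀ n : ℕ, (V →ₗ[ℝ] V) → Form V n → Form V n)
    (hact : ∀ (n : ℕ) (A : V →ₗ[ℝ] V) (φ : Form V n) (v : Fin n → V),
      act n A φ v = -∑ k, φ (Function.update v k (A (v k)))) :
    ∀ (r : ℕ) (φ : Form V (r + 1)),
      ∑ a, Rp act R e (J (e a)) (iprodS (e a) φ) = 0 := by
  rintro (_ | s) φ
  · simp only [Rp_eq_zero_of_degree_zero hact, Finset.sum_const_zero]
  · let B : V →ₗ[ℝ] V →ₗ[ℝ] Form V s := ∑ a, (R (J (e a))).compr₂ (iprodS (e a) φ).curryLeft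
    have hB : ∀ X Y, B X Y = B Y X := fun X Y => by
      simp only [B, LinearMap.sum_apply, LinearMap.compr₂_apply]
      exact sum_iprodS_R_J_comm hJO hJ2 hRskew hRskewadj hRbianchi hRJ e φ X Y
    calc ∑ a, Rp act R e (J (e a)) (iprodS (e a) φ)
        = -alternatizeUncurryFin (alternatizeUncurryFinLM ∘ₗ B) := by
          simp only [Rp_eq_neg_alternatizeUncurryFin hact, Finset.sum_neg_distrib]
          exact congrArg Neg.neg (map_sum (alternatizeUncurryFinLM ∘ₗ
            LinearMap.llcomp ℝ V _ _ alternatizeUncurryFinLM) _ _).symm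
      _ = 0 := by
          rw [alternatizeUncurryFin_alternatizeUncurryFinLM_comp_of_symmetric hB, neg_zero]

/-- For an algebraic Kähler curvature tensor `R` acting on `r`-forms,
`∑ₐ R₊(J eₐ)(i(eₐ)φ) = 0`, i.e. `∑_{a,b} θᵇ ∧ (R(J eₐ, e_b)(i(eₐ)φ)) = 0`,
for every `r`-form `φ`. -/
theorem sum_Rp_J_interior_eq_zero
    {m : ℕ} (hm : 1 ≤ m)
    (J : V →ₗ[ℝ] V) (hJO : ∀ x y : V, ⟪J x, J y⟫ = ⟪x, y⟫)
    (hJ2 : ∀ x : V, J (J x) = -x)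
    (e : OrthonormalBasis (Fin (2 * m)) ℝ V)
    (R : V →ₗ[ℝ] V →ₗ[ℝ] (V →ₗ[ℝ] V))
    (hRskew : ∀ X Y : V, R X Y = -R Y X)
    (hRskewadj : ∀ X Y u v : V, ⟪R X Y u, v⟫ = -⟪u, R X Y v⟫)
    (hRbianchi : ∀ X Y Z : V, R X Y Z + R Y Z X + R Z X Y = 0)
    (hRJ : ∀ X Y v : V, R X Y (J v) = J (R X Y v))
    (hRJJ : ∀ X Y : V, R (J X) (J Y) = R X Y)
    (act : ∀ n : ℕ, (V →ₗ[ℝ] V) → Form V n → Form V n)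
    (hact : ∀ (n : ℕ) (A : V →ₗ[ℝ] V) (φ : Form V n) (v : Fin n → V),
      act n A φ v = -∑ k, φ (Function.update v k (A (v k)))) :
    ∀ (r : ℕ) (φ : Form V (r + 1)),
      ∑ a, Rp act R e (J (e a)) (iprodS (e a) φ) = 0 :=
  sum_Rp_J_interior_eq_zero_general J hJO hJ2 e R hRskew hRskewadj hRbianchi hRJ act hact


end
end
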